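/- arXiv:2503.10955 — 2 statements merged into one kernel-verified Lean document; each statement's English description precedes it below -/
import Mathlib

section
/- In the language Imp, cost equivalence is compositional for sequential composition and while loops: for all program terms p, p', q, q' ∈ P and every expression e ∈ Ex, if cst(p) = cst(p') and cst(q) = cst(q') then cst(p;q) = cst(p';q'), and if cst(p) = cst(p') then cst(while e p) = cst(while e p'). -/
/-! # Statement 2: Compositionality of cost equivalence in Imp -/
namespace ImpLang

/-- Arithmetic expressions over the variable set `ℕ`. -/
inductive Ex : Type
  | const : ℤ → Ex
  | var : ℕ → Ex
  | add : Ex → Ex → Ex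
  | sub : Ex → Ex → Ex
  | mul : Ex → Ex → Ex

/-- Variable stores. -/
abbrev Store := ℕ → ℤ

/-- Expression evaluation. -/
def eev : Ex → Store → ℤ
  | .const n, _ => n
  | .var x, s => s x
  | .add e₁ e₂, s => eev e₁ s + eev e₂ s
  | .sub e₁ e₂, s => eev e₁ s - eev e₂ s
  | .mul e₁ e₂, s => eev e₁ s * eev e₂ s

/-- Store update `s[x := n]`. -/
def upd (s : Store) (x : ℕ) (n : ℤ) : Store := fun y => if y = x then n else s y

/-- Imp program terms. -/
inductive P : Type
  | skip : P
  | assign : ℕ → Ex → P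
  | whileE : Ex → P → P
  | seq : P → P → P

/-- The deterministic small-step operational semantics of Imp:
`step p s = .inl (p', s')` means `p,s → p',s'`, and `step p s = .inr s'` means
`p,s ↓ s'`. -/
def step : P → Store → (P × Store) ⊕ Store
  | .skip, s => .inr s
  | .assign x e, s => .inr (upd s x (eev e s))
  | .whileE e p, s =>
      if eev e s = 0 then .inr s else .inl (.seq p (.whileE e p), s)
  | .seq p q, s =>
      match step p s with
      | .inl (p', s') => .inl (.seq p' q, s')
      | .inr s' => .inl (q, s')

/-- Iterated execution of the small-step semantics: `runF c n` is the configuration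
reached after `n` steps from `c` (a running configuration `.inl (p,s)` or a
terminated one `.inr s'`), and `none` if the execution stopped strictly before. -/
def runF : (P × Store) ⊕ Store → ℕ → Option ((P × Store) ⊕ Store)
  | c, 0 => some c
  | c, n+1 =>
      match runF c n with
      | some (.inl (p, s)) => some (step p s)
      | _ => none

/-- The trace map of Imp, encoding the (nonempty, finite or infinite) sequence
`trc(p)(s) ∈ 𝒮^∞` as a function `ℕ → Option (Store ⊕ Store)`: the `n`-th entry is
`some (.inl sₙ)` for an intermediate store produced by a transition `→`,
`some (.inr s')` for the final store produced by `↓`, and `none` beyond the end of a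
finite trace. Thus a finite trace `(s₁,…,sₙ,s')` is the function sending
`0,…,n-1` to `some (.inl sᵢ₊₁)`, `n` to `some (.inr s')` and everything else to
`none`, and an infinite trace `(s₁,s₂,…)` is the function sending each `n` to
`some (.inl sₙ₊₁)`. -/
def trc (p : P) (s : Store) : ℕ → Option (Store ⊕ Store) := fun n =>
  match runF (.inl (p, s)) (n+1) with
  | some (.inl (_, s')) => some (.inl s')
  | some (.inr s') => some (.inr s')
  | none => none

open Classical in
/-- The cost map of Imp: `cst p s = some (n, s')` iff `trc p s = (s₁,…,sₙ,s')` is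
finite, and `cst p s = none` (the element `*`) iff `trc p s` is infinite. -/
noncomputable def cst (p : P) (s : Store) : Option (ℕ × Store) :=
  if h : ∃ ns : ℕ × Store, trc p s ns.1 = some (.inr ns.2) then some h.choose
  else none

/-- The termination map of Imp: `ter p s = some s'` iff `trc p s` is finite with
last element `s'`, and `ter p s = none` (the element `*`) iff `trc p s` is
infinite. -/
noncomputable def ter (p : P) (s : Store) : Option Store := (cst p s).map Prod.snd

end ImpLang

namespace ImpLang

lemma runF_succ' (c : (P × Store) ⊕ Store) (n : ℕ) :
    runF c (n+1) = match runF c n with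
      | some (.inl (p, s)) => some (step p s)
      | _ => none := rfl

lemma runF_inr (t : Store) : ∀ j, runF (.inr t) (j+1) = none
  | 0 => rfl
  | j+1 => by rw [runF_succ', runF_inr t j]

lemma runF_add (c : (P × Store) ⊕ Store) (m n : ℕ) :
    runF c (m + n) = (runF c m).bind (fun c' => runF c' n) := by
  induction n with
  | zero => rw [Nat.add_zero]; cases h : runF c m <;> simp [h, runF]
  | succ n ih =>
      rw [show m + (n+1) = (m+n)+1 from rfl, runF_succ', ih]
      cases h : runF c m with
      | none => simp [h]
      | some c' => simp [h]; rw [runF_succ']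

lemma runF_step (p : P) (s : Store) (n : ℕ) :
    runF (.inl (p, s)) (n+1) = runF (step p s) n := by
  rw [show n + 1 = 1 + n by omega, runF_add]; rfl

lemma runF_inr_unique_le {c : (P × Store) ⊕ Store} {n m : ℕ} {s' s'' : Store}
    (hnm : n ≤ m)
    (h1 : runF c (n+1) = some (.inr s'))
    (h2 : runF c (m+1) = some (.inr s'')) : n = m ∧ s' = s'' := by
  rcases Nat.exists_eq_add_of_le hnm with ⟨k, rfl⟩
  cases k with
  | zero => simp only [Nat.add_zero] at h2; rw [h1] at h2; injection h2 with h2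
            injection h2 with h2; exact ⟨rfl, h2⟩
  | succ k =>
      exfalso
      rw [show n + (k+1) + 1 = (n+1) + (k+1) by omega, runF_add, h1] at h2
      simp [runF_inr] at h2

lemma runF_inr_unique {c : (P × Store) ⊕ Store} {n m : ℕ} {s' s'' : Store}
    (h1 : runF c (n+1) = some (.inr s'))
    (h2 : runF c (m+1) = some (.inr s'')) : n = m ∧ s' = s'' := by
  rcases le_total n m with h | h
  · exact runF_inr_unique_le h h1 h2
  · obtain ⟨a, b⟩ := runF_inr_unique_le h h2 h1
    exact ⟨a.symm, b.symm⟩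

lemma trc_inr_iff (p : P) (s : Store) (n : ℕ) (s' : Store) :
    trc p s n = some (.inr s') ↔ runF (.inl (p, s)) (n+1) = some (.inr s') := by
  unfold trc
  rcases h : runF (.inl (p, s)) (n+1) with _ | (⟨p₁, s₁⟩ | t) <;> simp [h]

lemma cst_eq_some_iff {p : P} {s : Store} {n : ℕ} {s' : Store} :
    cst p s = some (n, s') ↔ runF (.inl (p, s)) (n+1) = some (.inr s') := by
  constructor
  · intro hc
    rw [cst] at hc
    split at hc
    case isTrue h =>
      have hs := h.choose_spec
      injection hc with hc
      rw [hc] at hs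
      exact (trc_inr_iff p s n s').mp hs
    case isFalse => exact absurd hc (by simp)
  · intro hr
    have hex : ∃ ns : ℕ × Store, trc p s ns.1 = some (.inr ns.2) :=
      ⟨(n, s'), (trc_inr_iff p s n s').mpr hr⟩
    rw [cst, dif_pos hex]
    have hs := hex.choose_spec
    obtain ⟨h1, h2⟩ :=
      runF_inr_unique ((trc_inr_iff p s _ _).mp hs) hr
    exact congrArg some (Prod.ext h1 h2)

lemma opt_ext {α : Type*} {a b : Option α} (h : ∀ v, a = some v ↔ b = some v) :
    a = b := by
  cases a with
  | none => cases b with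
    | none => rfl
    | some v => exact absurd ((h v).mpr rfl) (by simp)
  | some v => exact ((h v).mp rfl).symm

lemma seq_run_inl (q : P) : ∀ (n : ℕ) {p : P} {s : Store} {p₁ : P} {s₁ : Store},
    runF (.inl (p, s)) n = some (.inl (p₁, s₁)) →
    runF (.inl (P.seq p q, s)) n = some (.inl (P.seq p₁ q, s₁))
  | 0, p, s, p₁, s₁, h => by
      injection h with h; injection h with h
      obtain ⟨rfl, rfl⟩ := Prod.mk.injEq .. ▸ (by injection h; constructor <;> assumption : p = p₁ ∧ s = s₁)
      rfl
  | n+1, p, s, p₁, s₁, h => by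
      rw [runF_succ'] at h
      rcases hn : runF (.inl (p, s)) n with _ | (⟨p₂, s₂⟩ | t) <;> rw [hn] at h
      · exact absurd h (by simp)
      · rw [runF_succ', seq_run_inl q n hn]
        injection h with h
        simp [step, h]
      · exact absurd h (by simp)

lemma seq_run_inr {p : P} {s : Store} {s' : Store} (q : P) (n : ℕ)
    (h : runF (.inl (p, s)) (n+1) = some (.inr s')) :
    runF (.inl (P.seq p q, s)) (n+1) = some (.inl (q, s')) := by
  rw [runF_succ'] at h
  rcases hn : runF (.inl (p, s)) n with _ | (⟨p₂, s₂⟩ | t) <;> rw [hn] at h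
  · exact absurd h (by simp)
  · rw [runF_succ', seq_run_inl q n hn]
    injection h with h
    simp [step, h]
  · exact absurd h (by simp)

lemma seq_decomp (q p : P) (s : Store) : ∀ (n : ℕ) (c : (P × Store) ⊕ Store),
    runF (.inl (P.seq p q, s)) n = some c →
    (∃ p₁ s₁, c = .inl (P.seq p₁ q, s₁) ∧ runF (.inl (p, s)) n = some (.inl (p₁, s₁))) ∨
    (∃ m s₁, m + 1 ≤ n ∧ runF (.inl (p, s)) (m+1) = some (.inr s₁) ∧
      runF (.inl (q, s₁)) (n - (m+1)) = some c)
  | 0, c, h => by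
      injection h with h
      exact Or.inl ⟨p, s, h.symm, rfl⟩
  | n+1, c, h => by
      rw [runF_succ'] at h
      rcases hn : runF (.inl (P.seq p q, s)) n with _ | (⟨r, t⟩ | t) <;> rw [hn] at h
      · exact absurd h (by simp)
      case some.inl =>
        injection h with h
        rcases seq_decomp q p s n _ hn with ⟨p₁, s₁, hc, hrun⟩ | ⟨m, s₁, hm, hp, hq⟩
        · injection hc with hc
          injection hc with h1 h2
          rw [h1, h2] at h
          rcases hst : step p₁ s₁ with ⟨p₂, s₂⟩ | s₂
          · refine Or.inl ⟨p₂, s₂, ?_, ?_⟩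
            · rw [← h]; simp [step, hst]
            · rw [runF_succ', hrun]; simp [hst]
          · refine Or.inr ⟨n, s₂, le_refl _, ?_, ?_⟩
            · rw [runF_succ', hrun]; simp [hst]
            · rw [Nat.sub_self, ← h]
              simp [runF, step, hst]
        · refine Or.inr ⟨m, s₁, by omega, hp, ?_⟩
          rw [show n + 1 - (m+1) = (n - (m+1)) + 1 by omega, runF_succ', hq, ← h]
      · exact absurd h (by simp)

lemma cst_seq_iff {p q : P} {s : Store} {k : ℕ} {s'' : Store} :
    cst (P.seq p q) s = some (k, s'') ↔
    ∃ m s₁ j, cst p s = some (m, s₁) ∧ cst q s₁ = some (j, s'') ∧ k = m + j + 1 := by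
  rw [cst_eq_some_iff]
  constructor
  · intro h
    rcases seq_decomp q p s (k+1) _ h with ⟨p₁, s₁, hc, _⟩ | ⟨m, s₁, hm, hp, hq⟩
    · exact absurd hc (by simp)
    · rcases hj : k + 1 - (m+1) with _ | j
      · rw [hj] at hq
        exact absurd hq (by simp [runF])
      · rw [hj] at hq
        exact ⟨m, s₁, j, cst_eq_some_iff.mpr hp, cst_eq_some_iff.mpr hq, by omega⟩
  · rintro ⟨m, s₁, j, hp, hq, rfl⟩
    have h1 := seq_run_inr q m (cst_eq_some_iff.mp hp)
    have h2 := cst_eq_some_iff.mp hq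
    rw [show m + j + 1 + 1 = (m+1) + (j+1) by omega, runF_add, h1]
    exact h2

/-- Auxiliary: while-loop termination relation depending only on the cost map of
the body. -/
inductive WT (C : Store → Option (ℕ × Store)) (e : Ex) : Store → ℕ → Store → Prop
  | zero {s : Store} : eev e s = 0 → WT C e s 0 s
  | succ {s : Store} {m : ℕ} {s₁ : Store} {j : ℕ} {s₂ : Store} :
      eev e s ≠ 0 → C s = some (m, s₁) → WT C e s₁ j s₂ → WT C e s (m+j+2) s₂

lemma cst_while_iff {e : Ex} {p : P} {s : Store} {k : ℕ} {s' : Store} :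
    cst (P.whileE e p) s = some (k, s') ↔ WT (cst p) e s k s' := by
  constructor
  · induction k using Nat.strong_induction_on generalizing s s' with
    | _ k ih =>
      intro h
      rw [cst_eq_some_iff, runF_step] at h
      by_cases he : eev e s = 0
      · simp only [step] at h; rw [if_pos he] at h
        cases k with
        | zero =>
            injection h with h; injection h with h; subst h
            exact WT.zero he
        | succ k => exact absurd h (by simp [runF_inr])
      · simp only [step] at h; rw [if_neg he] at h
        cases k with
        | zero => exact absurd h (by simp [runF])
        | succ k' =>
            have hseq : cst (P.seq p (P.whileE e p)) s = some (k', s') :=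
              cst_eq_some_iff.mpr h
            obtain ⟨m, s₁, j, hp, hw, hk⟩ := cst_seq_iff.mp hseq
            have hj : j < k' + 1 := by omega
            have := ih j hj hw
            rw [show k' + 1 = m + j + 2 by omega]
            exact WT.succ he hp this
  · intro h
    induction h with
    | zero he =>
        rw [cst_eq_some_iff, runF_step]
        simp only [step, if_pos he]
        rfl
    | succ he hC _ ihw =>
        rw [cst_eq_some_iff, runF_step]
        simp only [step, if_neg he]
        exact cst_eq_some_iff.mp (cst_seq_iff.mpr ⟨_, _, _, hC, ihw, rfl⟩)

end ImpLang

namespace ImpLang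

/-- cost equivalence is compositional for sequential composition
and while loops. -/
theorem cost_equivalence_compositional :
    (∀ p p' q q' : P,
        cst p = cst p' → cst q = cst q' → cst (.seq p q) = cst (.seq p' q')) ∧
    (∀ (e : Ex) (p p' : P),
        cst p = cst p' → cst (.whileE e p) = cst (.whileE e p')) := by
  constructor
  · intro p p' q q' hp hq
    funext s
    apply opt_ext
    rintro ⟨k, s''⟩
    rw [cst_seq_iff, cst_seq_iff, hp, hq]
  · intro e p p' hp
    funext s
    apply opt_ext
    rintro ⟨k, s'⟩
    rw [cst_while_iff, cst_while_iff, hp]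

end ImpLang
end

section
/- Let (X, χ) be a deterministic reader–writer transition system over a state set 𝒮 in which there is no infinite chain c₀ → c₁ → c₂ → ⋯ of consecutive silent writer transitions. Then cost similarity coincides with cost equivalence: two readers p, q are related by the greatest cost simulation iff cst^r(p) = cst^r(q), and two writers c, d are related by the greatest cost simulation iff cst^w(c) = cst^w(d). -/
/-! # Statement 5: cost similarity = cost equivalence for deterministic reader–writer systems without silent divergence -/
namespace RW

/-- A deterministic reader–writer transition system over a state set `S`:
`rstep p s = c` means `p,s → c`; `wstep c = .inl (d,s)` means `c →ˢ d`;
`wstep c = .inr (.inl d)` means `c → d`; `wstep c = .inr (.inr s)` means `c ↓ s`. -/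
structure DRW (S : Type) where
  Rd : Type
  Wr : Type
  rstep : Rd → S → Wr
  wstep : Wr → (Wr × S) ⊕ (Wr ⊕ S)

variable {S : Type}

/-- The output transition `c →ˢ d`. -/
def OutTr (M : DRW S) (c : M.Wr) (s : S) (d : M.Wr) : Prop := M.wstep c = .inl (d, s)

/-- The silent transition `c → d`. -/
def TauTr (M : DRW S) (c d : M.Wr) : Prop := M.wstep c = .inr (.inl d)

/-- The termination transition `c ↓ s`. -/
def DownTr (M : DRW S) (c : M.Wr) (s : S) : Prop := M.wstep c = .inr (.inr s)

/-- The weak silent transition `c ⇒ d`: a finite chain of silent steps. -/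
def WSil (M : DRW S) : M.Wr → M.Wr → Prop := Relation.ReflTransGen (TauTr M)

/-- The weak output transition `c ⇒ˢ d`: `c ⇒ c' →ˢ d` for some `c'`. -/
def WOut (M : DRW S) (c : M.Wr) (s : S) (d : M.Wr) : Prop :=
  ∃ c', WSil M c c' ∧ OutTr M c' s d

/-- The weak termination transition `c ⇓ s`: `c ⇒ c' ↓ s` for some `c'`. -/
def WDone (M : DRW S) (c : M.Wr) (s : S) : Prop :=
  ∃ c', WSil M c c' ∧ DownTr M c' s

/-- `ReachL M c l d`: from `c` there is a chain of weak output transitions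
producing the list `l` of states and ending in `d`. -/
def ReachL (M : DRW S) : M.Wr → List S → M.Wr → Prop
  | c, [], d => c = d
  | c, s :: l, d => ∃ c', WOut M c s c' ∧ ReachL M c' l d

/-- `TrcEntry M c n v` holds iff the `n`-th entry (0-indexed) of the trace
`trc^w(c)` is `v`, where `v = .inl s` tags an intermediate output state and
`v = .inr s` tags the final state of a finite trace. -/
def TrcEntry (M : DRW S) (c : M.Wr) (n : ℕ) (v : S ⊕ S) : Prop :=
  (∃ l d s d', ReachL M c l d ∧ l.length = n ∧ WOut M d s d' ∧ v = .inl s) ∨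
  (∃ l d s, ReachL M c l d ∧ l.length = n ∧ WDone M d s ∧ v = .inr s)

open Classical in
/-- The writer trace map `trc^w : X_w → 𝒮^∞`, with a (nonempty, finite or infinite)
trace encoded as a function `ℕ → Option (S ⊕ S)`: a finite trace `(s₁,…,sₙ,s)`
sends `0,…,n-1` to `some (.inl sᵢ₊₁)`, `n` to `some (.inr s)` and all larger
numbers to `none`; an infinite trace `(s₁,s₂,…)` sends each `n` to
`some (.inl sₙ₊₁)`. -/
noncomputable def trcW (M : DRW S) (c : M.Wr) : ℕ → Option (S ⊕ S) := fun n =>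
  if h : ∃ v, TrcEntry M c n v then some h.choose else none

/-- The reader trace map `trc^r : X_r → (𝒮^∞)^𝒮`: `trc^r(p)(s) = trc^w(c)` where
`p,s → c`. -/
noncomputable def trcR (M : DRW S) (p : M.Rd) (s : S) : ℕ → Option (S ⊕ S) :=
  trcW M (M.rstep p s)

open Classical in
/-- The writer cost map: `cstW M c = some (n,s)` iff `trc^w(c) = (s₁,…,sₙ,s)` is
finite, and `none` (i.e. `*`) iff `trc^w(c)` is infinite. -/
noncomputable def cstW (M : DRW S) (c : M.Wr) : Option (ℕ × S) :=
  if h : ∃ ns : ℕ × S, trcW M c ns.1 = some (.inr ns.2) then some h.choose else none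

/-- The reader cost map. -/
noncomputable def cstR (M : DRW S) (p : M.Rd) (s : S) : Option (ℕ × S) :=
  cstW M (M.rstep p s)

/-- The writer termination map: the last element of a finite trace, `none` (`*`)
for an infinite trace. -/
noncomputable def terW (M : DRW S) (c : M.Wr) : Option S := (cstW M c).map Prod.snd

/-- The reader termination map. -/
noncomputable def terR (M : DRW S) (p : M.Rd) (s : S) : Option S :=
  (cstR M p s).map Prod.snd

end RW

namespace RW

variable {S : Type}

/-- A cost simulation on a deterministic reader–writer transition system. -/
def IsCostSim (M : DRW S) (Rr : M.Rd → M.Rd → Prop) (Rw : M.Wr → M.Wr → Prop) : Prop :=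
  (∀ p q s c, Rr p q → M.rstep p s = c → ∃ d, M.rstep q s = d ∧ Rw c d) ∧
  (∀ c d c', Rw c d → TauTr M c c' → ∃ d', WSil M d d' ∧ Rw c' d') ∧
  (∀ c d s c', Rw c d → OutTr M c s c' → ∃ d' s', WOut M d s' d' ∧ Rw c' d') ∧
  (∀ c d s, Rw c d → DownTr M c s → WDone M d s)

/-- Two readers are related by the greatest cost simulation (the union of all
cost simulations). -/
def CostSimR (M : DRW S) (p q : M.Rd) : Prop :=
  ∃ Rr Rw, IsCostSim M Rr Rw ∧ Rr p q

/-- Two writers are related by the greatest cost simulation. -/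
def CostSimW (M : DRW S) (c d : M.Wr) : Prop :=
  ∃ Rr Rw, IsCostSim M Rr Rw ∧ Rw c d

/-! In a deterministic system the weak transitions are deterministic too, so the trace of a writer
is generated step by step and its cost is `some (n, s)` exactly when it halts with `s` after `n`
weak outputs (`HaltsAfter`). A cost simulation carries halting forwards by matching weak outputs
one at a time; it also reflects halting, because without silent divergence the simulated writer
always makes progress, and every step it makes is matched on the other side, which is
deterministic. Conversely, equality of costs is itself a cost simulation: an output step lowers
the cost of both sides by exactly one. -/

variable {M : DRW S}

def Stable (M : DRW S) (c : M.Wr) : Prop := ∀ d, ¬ TauTr M c d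

/-- `HaltsAfter M c n s`: the trace of `c` is finite, of the form `(s₁, …, sₙ, s)`. -/
inductive HaltsAfter (M : DRW S) : M.Wr → ℕ → S → Prop
  | done {c s} : WDone M c s → HaltsAfter M c 0 s
  | out {c c' t n s} : WOut M c t c' → HaltsAfter M c' n s → HaltsAfter M c (n + 1) s

section Determinism

variable {c c' d d₁ d₂ e₁ e₂ : M.Wr} {s s₁ s₂ t : S}

theorem TauTr.unique (h₁ : TauTr M c d₁) (h₂ : TauTr M c d₂) : d₁ = d₂ := by
  simpa using h₁.symm.trans h₂

theorem OutTr.unique (h₁ : OutTr M c s₁ d₁) (h₂ : OutTr M c s₂ d₂) : s₁ = s₂ ∧ d₁ = d₂ := by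
  have := h₁.symm.trans h₂
  simp only [Sum.inl.injEq, Prod.mk.injEq] at this
  exact this.symm

theorem DownTr.unique (h₁ : DownTr M c s₁) (h₂ : DownTr M c s₂) : s₁ = s₂ := by
  simpa using h₁.symm.trans h₂

theorem OutTr.stable (h : OutTr M c s d) : Stable M c := fun _ h' => by
  simpa using h.symm.trans h'

theorem DownTr.stable (h : DownTr M c s) : Stable M c := fun _ h' => by
  simpa using h.symm.trans h'

theorem OutTr.not_downTr (h : OutTr M c s d) (h' : DownTr M c t) : False := by
  simpa using h.symm.trans h'

theorem WSil.eq_of_stable (h₁ : WSil M c e₁) (h₂ : WSil M c e₂) (hs₁ : Stable M e₁)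
    (hs₂ : Stable M e₂) : e₁ = e₂ := by
  induction h₁ using Relation.ReflTransGen.head_induction_on with
  | refl =>
    rcases h₂.cases_head with rfl | ⟨b, hb, -⟩
    · rfl
    · exact absurd hb (hs₁ b)
  | head hab _ ih =>
    rcases h₂.cases_head with rfl | ⟨b, hb, hrest⟩
    · exact absurd hab (hs₂ _)
    · exact ih (hab.unique hb ▸ hrest)

theorem wSil_iff_of_tauTr (h : TauTr M c c') (hs : Stable M d) : WSil M c d ↔ WSil M c' d := by
  refine ⟨fun hcd => ?_, Relation.ReflTransGen.head h⟩
  rcases hcd.cases_head with rfl | ⟨b, hb, hrest⟩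
  · exact absurd h (hs c')
  · exact h.unique hb ▸ hrest

theorem WOut.unique (h₁ : WOut M c s₁ d₁) (h₂ : WOut M c s₂ d₂) : s₁ = s₂ ∧ d₁ = d₂ := by
  obtain ⟨e₁, hc₁, ho₁⟩ := h₁
  obtain ⟨e₂, hc₂, ho₂⟩ := h₂
  cases hc₁.eq_of_stable hc₂ ho₁.stable ho₂.stable
  exact ho₁.unique ho₂

theorem WDone.unique (h₁ : WDone M c s₁) (h₂ : WDone M c s₂) : s₁ = s₂ := by
  obtain ⟨e₁, hc₁, ho₁⟩ := h₁
  obtain ⟨e₂, hc₂, ho₂⟩ := h₂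
  cases hc₁.eq_of_stable hc₂ ho₁.stable ho₂.stable
  exact ho₁.unique ho₂

theorem WOut.not_wDone (h : WOut M c s d) (h' : WDone M c t) : False := by
  obtain ⟨e₁, hc₁, ho₁⟩ := h
  obtain ⟨e₂, hc₂, ho₂⟩ := h'
  cases hc₁.eq_of_stable hc₂ ho₁.stable ho₂.stable
  exact ho₁.not_downTr ho₂

theorem wOut_iff_of_tauTr (h : TauTr M c c') : WOut M c s d ↔ WOut M c' s d :=
  exists_congr fun _ => and_congr_left fun ho => wSil_iff_of_tauTr h ho.stable

theorem wDone_iff_of_tauTr (h : TauTr M c c') : WDone M c s ↔ WDone M c' s :=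
  exists_congr fun _ => and_congr_left fun ho => wSil_iff_of_tauTr h ho.stable

theorem ReachL.unique {l₁ l₂ : List S} (h₁ : ReachL M c l₁ d₁) (h₂ : ReachL M c l₂ d₂)
    (hl : l₁.length = l₂.length) : d₁ = d₂ := by
  induction l₁ generalizing c l₂ with
  | nil => cases l₂ with
    | nil => exact h₁.symm.trans h₂
    | cons => simp at hl
  | cons _ _ ih => cases l₂ with
    | nil => simp at hl
    | cons =>
      obtain ⟨e₁, hw₁, hr₁⟩ := h₁
      obtain ⟨e₂, hw₂, hr₂⟩ := h₂
      cases (hw₁.unique hw₂).2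
      exact ih hr₁ hr₂ (by simpa using hl)

end Determinism

section Halting

variable {c c' : M.Wr} {n m : ℕ} {s t : S}

theorem HaltsAfter.unique (h₁ : HaltsAfter M c n s) (h₂ : HaltsAfter M c m t) :
    n = m ∧ s = t := by
  induction h₁ generalizing m with
  | done hd => cases h₂ with
    | done hd' => exact ⟨rfl, hd.unique hd'⟩
    | out hw _ => exact (hw.not_wDone hd).elim
  | out hw _ ih => cases h₂ with
    | done hd => exact (hw.not_wDone hd).elim
    | out hw' h' =>
      cases (hw.unique hw').2
      exact (ih h').imp (congrArg (· + 1)) id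

theorem WOut.haltsAfter_succ_iff (h : WOut M c t c') :
    HaltsAfter M c (n + 1) s ↔ HaltsAfter M c' n s := by
  refine ⟨fun hc => ?_, HaltsAfter.out h⟩
  cases hc with
  | out hw hc' => exact (h.unique hw).2 ▸ hc'

theorem haltsAfter_iff_of_tauTr (h : TauTr M c c') :
    HaltsAfter M c n s ↔ HaltsAfter M c' n s := by
  constructor <;> rintro (⟨hd⟩ | ⟨hw, hc⟩)
  exacts [.done ((wDone_iff_of_tauTr h).1 hd), .out ((wOut_iff_of_tauTr h).1 hw) hc,
    .done ((wDone_iff_of_tauTr h).2 hd), .out ((wOut_iff_of_tauTr h).2 hw) hc]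

theorem haltsAfter_iff_exists_reachL :
    HaltsAfter M c n s ↔ ∃ l d, ReachL M c l d ∧ l.length = n ∧ WDone M d s := by
  constructor
  · intro h
    induction h with
    | done hd => exact ⟨[], _, rfl, rfl, hd⟩
    | out hw _ ih =>
      obtain ⟨l, d, hr, rfl, hd⟩ := ih
      exact ⟨_ :: l, d, ⟨_, hw, hr⟩, rfl, hd⟩
  · rintro ⟨l, d, hr, rfl, hd⟩
    induction l generalizing c with
    | nil => exact .done (hr ▸ hd)
    | cons _ _ ih =>
      obtain ⟨e, hw, hr⟩ := hr
      exact .out hw (ih hr)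

theorem exists_wOut_or_wDone (hwf : WellFounded (flip (TauTr M))) (c : M.Wr) :
    (∃ s d, WOut M c s d) ∨ ∃ s, WDone M c s := by
  induction c using hwf.induction with
  | _ c ih =>
    rcases h : M.wstep c with ⟨d, s⟩ | d | s
    · exact .inl ⟨s, d, c, .refl, h⟩
    · rcases ih d h with ⟨s, e, c', hsil, hout⟩ | ⟨s, c', hsil, hdown⟩
      · exact .inl ⟨s, e, c', .head h hsil, hout⟩
      · exact .inr ⟨s, c', .head h hsil, hdown⟩
    · exact .inr ⟨s, c, .refl, h⟩

end Halting

section Cost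

variable {c d : M.Wr} {n : ℕ} {s : S} {v v' : S ⊕ S}

theorem TrcEntry.unique (h₁ : TrcEntry M c n v) (h₂ : TrcEntry M c n v') : v = v' := by
  rcases h₁ with ⟨l, d, s, d', hr, hl, hw, rfl⟩ | ⟨l, d, s, hr, hl, hw, rfl⟩ <;>
    rcases h₂ with ⟨l', e, t, e', hr', hl', hw', rfl⟩ | ⟨l', e, t, hr', hl', hw', rfl⟩ <;>
    cases hr.unique hr' (hl.trans hl'.symm)
  · rw [(hw.unique hw').1]
  · exact (hw.not_wDone hw').elim
  · exact (hw'.not_wDone hw).elim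
  · rw [hw.unique hw']

open Classical in
theorem trcW_eq_some_iff : trcW M c n = some v ↔ TrcEntry M c n v := by
  unfold trcW
  split
  · rename_i h
    exact ⟨fun he => Option.some_inj.1 he ▸ h.choose_spec,
      fun he => congrArg some (TrcEntry.unique h.choose_spec he)⟩
  · rename_i h
    exact ⟨nofun, fun he => (h ⟨v, he⟩).elim⟩

theorem trcW_eq_some_inr_iff : trcW M c n = some (.inr s) ↔ HaltsAfter M c n s := by
  rw [trcW_eq_some_iff, haltsAfter_iff_exists_reachL, TrcEntry]
  simp

open Classical in
theorem cstW_eq_some_iff {ns : ℕ × S} : cstW M c = some ns ↔ HaltsAfter M c ns.1 ns.2 := by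
  unfold cstW
  split
  · rename_i h
    have hc := trcW_eq_some_inr_iff.1 h.choose_spec
    refine ⟨fun he => Option.some_inj.1 he ▸ hc, fun he => ?_⟩
    obtain ⟨h₁, h₂⟩ := hc.unique he
    exact congrArg some (Prod.ext h₁ h₂)
  · rename_i h
    exact ⟨nofun, fun he => (h ⟨ns, trcW_eq_some_inr_iff.2 he⟩).elim⟩

theorem cstW_eq_cstW_iff :
    cstW M c = cstW M d ↔ ∀ n s, HaltsAfter M c n s ↔ HaltsAfter M d n s := by
  refine ⟨fun h n s => ?_, fun h => Option.ext fun ns => ?_⟩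
  · rw [← cstW_eq_some_iff (ns := (n, s)), ← cstW_eq_some_iff (ns := (n, s)), h]
  · rw [cstW_eq_some_iff, cstW_eq_some_iff, h]

end Cost

namespace IsCostSim

variable {Rr : M.Rd → M.Rd → Prop} {Rw : M.Wr → M.Wr → Prop} (hR : IsCostSim M Rr Rw)
  {c c' d : M.Wr} {n : ℕ} {s : S}
include hR

theorem wSil (hcd : Rw c d) (h : WSil M c c') : ∃ d', WSil M d d' ∧ Rw c' d' := by
  induction h with
  | refl => exact ⟨d, .refl, hcd⟩
  | tail _ hstep ih =>
    obtain ⟨d₁, hd₁, hR₁⟩ := ih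
    obtain ⟨d₂, hd₂, hR₂⟩ := hR.2.1 _ _ _ hR₁ hstep
    exact ⟨d₂, hd₁.trans hd₂, hR₂⟩

theorem wOut (hcd : Rw c d) (h : WOut M c s c') : ∃ d' s', WOut M d s' d' ∧ Rw c' d' := by
  obtain ⟨e, hsil, hout⟩ := h
  obtain ⟨d₁, hd₁, hR₁⟩ := hR.wSil hcd hsil
  obtain ⟨d', s', ⟨e', he₁, he₂⟩, hR₂⟩ := hR.2.2.1 _ _ _ _ hR₁ hout
  exact ⟨d', s', ⟨e', hd₁.trans he₁, he₂⟩, hR₂⟩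

theorem wDone (hcd : Rw c d) (h : WDone M c s) : WDone M d s := by
  obtain ⟨e, hsil, hdown⟩ := h
  obtain ⟨d₁, hd₁, hR₁⟩ := hR.wSil hcd hsil
  obtain ⟨e', he₁, he₂⟩ := hR.2.2.2 _ _ _ hR₁ hdown
  exact ⟨e', hd₁.trans he₁, he₂⟩

theorem haltsAfter (hcd : Rw c d) (h : HaltsAfter M c n s) : HaltsAfter M d n s := by
  induction h generalizing d with
  | done hc => exact .done (hR.wDone hcd hc)
  | out hw _ ih =>
    obtain ⟨d', s', hw', hR'⟩ := hR.wOut hcd hw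
    exact .out hw' (ih hR')

theorem haltsAfter_iff (hwf : WellFounded (flip (TauTr M))) (hcd : Rw c d) :
    HaltsAfter M c n s ↔ HaltsAfter M d n s := by
  refine ⟨hR.haltsAfter hcd, fun h => ?_⟩
  induction h generalizing c with
  | done hd =>
    rcases exists_wOut_or_wDone hwf c with ⟨t, c', hc⟩ | ⟨t, hc⟩
    · obtain ⟨d', s', hw', -⟩ := hR.wOut hcd hc
      exact (hw'.not_wDone hd).elim
    · exact hd.unique (hR.wDone hcd hc) ▸ .done hc
  | out hw _ ih =>
    rcases exists_wOut_or_wDone hwf c with ⟨t, c', hc⟩ | ⟨t, hc⟩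
    · obtain ⟨d', s', hw', hR'⟩ := hR.wOut hcd hc
      cases (hw.unique hw').2
      exact .out hc (ih hR')
    · exact (hw.not_wDone (hR.wDone hcd hc)).elim

theorem cstW_eq (hwf : WellFounded (flip (TauTr M))) (hcd : Rw c d) : cstW M c = cstW M d :=
  cstW_eq_cstW_iff.2 fun _ _ => hR.haltsAfter_iff hwf hcd

end IsCostSim

theorem isCostSim_cst_eq (hwf : WellFounded (flip (TauTr M))) :
    IsCostSim M (fun p q => cstR M p = cstR M q) (fun c d => cstW M c = cstW M d) := by
  refine ⟨fun p q s c hpq hc => ⟨_, rfl, hc ▸ congrFun hpq s⟩, fun c d c' hcd h => ?_,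
    fun c d s c' hcd h => ?_, fun c d s hcd h => ?_⟩
  · exact ⟨d, .refl, (cstW_eq_cstW_iff.2 fun _ _ => (haltsAfter_iff_of_tauTr h).symm).trans hcd⟩
  · have hc : WOut M c s c' := ⟨c, .refl, h⟩
    rcases exists_wOut_or_wDone hwf d with ⟨u, d', hd⟩ | ⟨u, hd⟩
    · refine ⟨d', u, hd, cstW_eq_cstW_iff.2 fun n t => ?_⟩
      rw [← hc.haltsAfter_succ_iff, ← hd.haltsAfter_succ_iff]
      exact cstW_eq_cstW_iff.1 hcd _ _
    · have := (cstW_eq_cstW_iff.1 hcd 0 u).2 (.done hd)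
      cases this with
      | done hc' => exact (hc.not_wDone hc').elim
  · have := (cstW_eq_cstW_iff.1 hcd 0 s).1 (.done ⟨c, .refl, h⟩)
    cases this with
    | done hd => exact hd

theorem wellFounded_flip_tauTr (nodiv : ¬ ∃ f : ℕ → M.Wr, ∀ n, TauTr M (f n) (f (n + 1))) :
    WellFounded (flip (TauTr M)) :=
  wellFounded_iff_isEmpty_descending_chain.2 ⟨fun ⟨f, hf⟩ => nodiv ⟨f, hf⟩⟩

/-- in a deterministic reader–writer transition system with no
infinite chain of consecutive silent writer transitions, cost similarity coincides
with cost equivalence, both on readers and on writers. -/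
theorem cost_similarity_eq_cost_equivalence (M : DRW S)
    (nodiv : ¬ ∃ f : ℕ → M.Wr, ∀ n, TauTr M (f n) (f (n + 1))) :
    (∀ p q : M.Rd, CostSimR M p q ↔ cstR M p = cstR M q) ∧
    (∀ c d : M.Wr, CostSimW M c d ↔ cstW M c = cstW M d) := by
  have hwf := wellFounded_flip_tauTr nodiv
  refine ⟨fun p q => ⟨?_, fun h => ⟨_, _, isCostSim_cst_eq hwf, h⟩⟩,
    fun c d => ⟨?_, fun h => ⟨_, _, isCostSim_cst_eq hwf, h⟩⟩⟩
  · rintro ⟨Rr, Rw, hR, hpq⟩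
    funext s
    obtain ⟨d, hd, hcd⟩ := hR.1 p q s _ hpq rfl
    exact (hR.cstW_eq hwf hcd).trans (congrArg (cstW M) hd).symm
  · rintro ⟨Rr, Rw, hR, hcd⟩
    exact hR.cstW_eq hwf hcd

end RW
end
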